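/- There exists a strictly increasing function f : ℝ → ℝ and an irrational number ξ such that f is differentiable at ξ with f'(ξ) = 1, and f'(x) = 0 for almost every x ∈ ℝ. -/

import Mathlib

/-!
The cumulative distribution function `g` of a probability measure carried by the rationals and
charging every interval is strictly increasing with `g' = 0` almost everywhere. Choose an
irrational `ξ` with `g'(ξ) = 0` and add the monotone step function `h ↦ recipStair (h - ξ)`,
which rounds `h - ξ` towards zero to the nearest reciprocal of an integer: it is locally constant
away from a countable set and differs from `h - ξ` by at most `(h - ξ)²`, so it has derivative
`1` at `ξ`.
-/

open MeasureTheory Filter Set Topology ProbabilityTheory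

/-- At `h = 0` both inverses are junk, giving `recipStair 0 = 0`. -/
noncomputable def recipStair (h : ℝ) : ℝ :=
  SignType.sign h * ((⌈|h|⁻¹⌉ : ℤ) : ℝ)⁻¹

lemma recipStair_neg (h : ℝ) : recipStair (-h) = -recipStair h := by
  simp [recipStair, Left.sign_neg, neg_mul]

lemma recipStair_of_nonneg {h : ℝ} (hh : 0 ≤ h) : recipStair h = ((⌈h⁻¹⌉ : ℤ) : ℝ)⁻¹ := by
  rcases hh.eq_or_lt with rfl | hpos
  · simp [recipStair]
  · simp [recipStair, sign_pos hpos, abs_of_pos hpos]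

lemma monotone_recipStair : Monotone recipStair := by
  refine monotone_of_odd_of_monotoneOn_nonneg recipStair_neg fun a ha b hb hab => ?_
  rw [recipStair_of_nonneg ha, recipStair_of_nonneg hb]
  rcases (mem_Ici.1 ha).eq_or_lt with rfl | hpos
  · simpa using Int.ceil_nonneg (inv_nonneg.2 (mem_Ici.1 hb))
  · exact inv_anti₀ (by exact_mod_cast Int.ceil_pos.2 (inv_pos.2 (hpos.trans_le hab)))
      (by exact_mod_cast Int.ceil_le_ceil (inv_anti₀ hpos hab))

lemma abs_recipStair_sub_le (h : ℝ) : |recipStair h - h| ≤ h ^ 2 := by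
  wlog hh : 0 ≤ h generalizing h
  · simpa [recipStair_neg, abs_sub_comm, neg_add_eq_sub] using this (-h) (by linarith)
  rcases hh.eq_or_lt with rfl | hpos
  · simp [recipStair]
  rw [recipStair_of_nonneg hh]
  set n : ℝ := ((⌈h⁻¹⌉ : ℤ) : ℝ)
  have hn_ge : h⁻¹ ≤ n := Int.le_ceil _
  have hn_lt : n < h⁻¹ + 1 := Int.ceil_lt_add_one _
  have hn_pos : 0 < n := (inv_pos.2 hpos).trans_le hn_ge
  have hinv_le : n⁻¹ ≤ h := by rwa [inv_le_comm₀ hn_pos hpos]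
  have hnh : n * h < 1 + h := by
    have := mul_lt_mul_of_pos_right hn_lt hpos
    rwa [add_mul, inv_mul_cancel₀ hpos.ne', one_mul] at this
  calc |n⁻¹ - h| = (n * h - 1) * n⁻¹ := by
        rw [abs_of_nonpos (by linarith), sub_mul, mul_comm n, mul_assoc, mul_inv_cancel₀ hn_pos.ne']
        ring
    _ ≤ h * n⁻¹ := by gcongr; linarith
    _ ≤ h ^ 2 := by rw [sq]; gcongr

lemma hasDerivAt_recipStair_zero : HasDerivAt recipStair 1 0 := by
  rw [hasDerivAt_iff_isLittleO]
  simp only [sub_zero]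
  refine Asymptotics.IsBigO.trans_isLittleO ?_ (Asymptotics.isLittleO_pow_id one_lt_two)
  refine Asymptotics.isBigO_of_le _ fun h => ?_
  simpa [recipStair] using (abs_recipStair_sub_le h).trans (le_abs_self _)

lemma Int.eventually_ceil_eq {α : Type*} [Ring α] [LinearOrder α] [IsStrictOrderedRing α]
    [FloorRing α] [TopologicalSpace α] [OrderTopology α] {y : α} (hy : ∀ n : ℤ, y ≠ n) :
    ∀ᶠ z in 𝓝 y, ⌈z⌉ = ⌈y⌉ := by
  have hlt : y < ⌈y⌉ := (Int.le_ceil y).lt_of_ne (hy _)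
  filter_upwards [Ioo_mem_nhds (Int.ceil_lt_add_one y |> sub_lt_iff_lt_add.2) hlt] with z hz
  exact Int.ceil_eq_iff.2 ⟨hz.1, hz.2.le⟩

lemma recipStair_eventuallyEq {c : ℝ} (hc : ∀ n : ℤ, |c|⁻¹ ≠ n) :
    recipStair =ᶠ[𝓝 c] fun _ => recipStair c := by
  have hc0 : c ≠ 0 := by rintro rfl; exact hc 0 (by simp)
  have hsign : ∀ᶠ h in 𝓝 c, SignType.sign h = SignType.sign c :=
    continuousAt_sign_of_ne_zero hc0 ((isOpen_discrete {SignType.sign c}).mem_nhds rfl)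
  have hceil : ∀ᶠ h in 𝓝 c, ⌈|h|⁻¹⌉ = ⌈|c|⁻¹⌉ :=
    ((continuous_abs.continuousAt.inv₀ (abs_ne_zero.2 hc0)).eventually
      (Int.eventually_ceil_eq hc))
  filter_upwards [hsign, hceil] with h h₁ h₂
  simp only [recipStair, h₁, h₂]

lemma countable_setOf_abs_inv_eq_intCast : {c : ℝ | ∃ n : ℤ, |c|⁻¹ = n}.Countable := by
  refine ((countable_range fun n : ℤ => (n : ℝ)⁻¹).union
    (countable_range fun n : ℤ => -(n : ℝ)⁻¹)).mono ?_
  rintro c ⟨n, hn⟩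
  rw [inv_eq_iff_eq_inv] at hn
  rcases abs_choice c with hc | hc
  · exact Or.inl ⟨n, by simp only [← hn, hc]⟩
  · exact Or.inr ⟨n, by simp only [← hn, hc, neg_neg]⟩

lemma ae_hasDerivAt_recipStair : ∀ᵐ h : ℝ, HasDerivAt recipStair 0 h := by
  filter_upwards [countable_setOf_abs_inv_eq_intCast.ae_notMem volume] with c hc
  push Not at hc
  exact (hasDerivAt_const c (recipStair c)).congr_of_eventuallyEq (recipStair_eventuallyEq hc)

lemma StieltjesFunction.ae_hasDerivAt_zero_of_mutuallySingular (f : StieltjesFunction ℝ)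
    (hf : f.measure ⟂ₘ volume) : ∀ᵐ x, HasDerivAt f 0 x := by
  filter_upwards [f.ae_hasDerivAt, (Measure.rnDeriv_eq_zero _ _).2 hf] with x hx hzero
  simpa [hzero] using hx

lemma StieltjesFunction.strictMono_of_measure_Ioc_ne_zero (f : StieltjesFunction ℝ)
    (hf : ∀ x y, x < y → f.measure (Ioc x y) ≠ 0) : StrictMono f := by
  intro x y hxy
  simpa [f.measure_Ioc] using hf x y hxy

lemma exists_isProbabilityMeasure_mutuallySingular_volume :
    ∃ μ : Measure ℝ, IsProbabilityMeasure μ ∧ μ ⟂ₘ volume ∧ ∀ x y, x < y → μ (Ioc x y) ≠ 0 := by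
  obtain ⟨e, he⟩ := exists_surjective_nat ℚ
  let q : ℕ → ℝ := fun n => (e n : ℝ)
  let p : unitInterval := ⟨1 / 2, by norm_num, by norm_num⟩
  have hp0 : p ≠ 0 := by simp [p, ← Subtype.coe_inj]
  have hp1 : p ≠ 1 := by simp [p, ← Subtype.coe_inj]
  have hq : Measurable q := measurable_from_nat
  refine ⟨(geometricMeasure p).map q, Measure.isProbabilityMeasure_map hq.aemeasurable,
    ⟨(range q)ᶜ, (countable_range q).measurableSet.compl, ?_, ?_⟩, fun x y hxy => ?_⟩
  · rw [Measure.map_apply hq (countable_range q).measurableSet.compl]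
    simp
  · simpa using (countable_range q).measure_zero volume
  · obtain ⟨r, hxr, hry⟩ := exists_rat_btwn hxy
    obtain ⟨n, rfl⟩ := he r
    rw [Measure.map_apply hq measurableSet_Ioc]
    refine ne_of_gt ((?_ : 0 < geometricMeasure p {n}).trans_le (measure_mono ?_))
    · rw [geometricMeasure_singleton hp0]
      exact ENNReal.ofReal_pos.2 (geometricMeasure_pos hp0 hp1 _)
    · exact singleton_subset_iff.2 ⟨hxr, hry.le⟩

lemma exists_strictMono_ae_hasDerivAt_zero :
    ∃ g : ℝ → ℝ, StrictMono g ∧ ∀ᵐ x, HasDerivAt g 0 x := by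
  obtain ⟨μ, _, hsing, hpos⟩ := exists_isProbabilityMeasure_mutuallySingular_volume
  refine ⟨cdf μ, (cdf μ).strictMono_of_measure_Ioc_ne_zero ?_,
    (cdf μ).ae_hasDerivAt_zero_of_mutuallySingular ?_⟩ <;> rwa [measure_cdf]

lemma ae_irrational : ∀ᵐ x : ℝ, Irrational x := by
  refine (countable_range ((↑) : ℚ → ℝ)).ae_notMem volume |>.mono fun x hx => ?_
  simpa [Irrational] using hx

theorem stmt5 :
    ∃ (f : ℝ → ℝ) (ξ : ℝ), StrictMono f ∧ Irrational ξ ∧ HasDerivAt f 1 ξ ∧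
      ∀ᵐ x : ℝ ∂MeasureTheory.volume, HasDerivAt f 0 x := by
  obtain ⟨g, hg_mono, hg_deriv⟩ := exists_strictMono_ae_hasDerivAt_zero
  obtain ⟨ξ, hgξ, hξ⟩ := (hg_deriv.and ae_irrational).exists
  have hstair_ξ : HasDerivAt (fun x => recipStair (x - ξ)) 1 ξ :=
    HasDerivAt.comp_sub_const ξ ξ (by rw [sub_self]; exact hasDerivAt_recipStair_zero)
  have hstair_ae : ∀ᵐ x, HasDerivAt (fun x => recipStair (x - ξ)) 0 x :=
    (measurePreserving_sub_right volume ξ).quasiMeasurePreserving.ae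
      (p := HasDerivAt recipStair 0) ae_hasDerivAt_recipStair |>.mono
      fun x hx => hx.comp_sub_const x ξ
  refine ⟨fun x => g x + recipStair (x - ξ), ξ,
    hg_mono.add_monotone (monotone_recipStair.comp fun _ _ h => sub_le_sub_right h ξ), hξ,
    zero_add (1 : ℝ) ▸ hgξ.add hstair_ξ, ?_⟩
  filter_upwards [hg_deriv, hstair_ae] with x hgx hstair_x
  exact add_zero (0 : ℝ) ▸ hgx.add hstair_x
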